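/- Let A_ρ ⊆ M_n(ℂ) be a structural matrix algebra and let φ : A_ρ → M_n(ℂ) be an injective map satisfying φ(X ∘ Y) = φ(X) ∘ φ(Y) for all X, Y ∈ A_ρ, where ∘ is the normalized Jordan product. If P₁,…,P_r ∈ A_ρ are mutually orthogonal idempotents and λ₁,…,λ_r ∈ ℂ, then φ(Σ_{j=1}^r λ_j P_j) = Σ_{j=1}^r φ(λ_j P_j). -/

import Mathlib

/-- The structural matrix algebra determined by a quasi-order `ρ` on `Fin n`. -/
def structuralMatrixAlgebra {n : ℕ} (ρ : Fin n → Fin n → Prop) :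
    Set (Matrix (Fin n) (Fin n) ℂ) :=
  {X | ∀ i j, ¬ ρ i j → X i j = 0}

/-- The normalized Jordan product `X ∘ Y = (1/2)(XY + YX)`. -/
noncomputable def njord {n : ℕ} (X Y : Matrix (Fin n) (Fin n) ℂ) : Matrix (Fin n) (Fin n) ℂ :=
  (1 / 2 : ℂ) • (X * Y + Y * X)

/-! For an idempotent `u`, `u ∘ y = y` forces `uy = y = yu` and `u ∘ y = 0` forces `uy = 0 = yu`,
so a Jordan multiplicative map preserves idempotents, their order (`e ≤ f` iff `ef = e = fe`) and
their orthogonality. Every nonzero idempotent `p` of the algebra dominates the rank-one idempotent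
`p Eᵢᵢ p / pᵢᵢ` of the algebra (for some `pᵢᵢ ≠ 0`); peeling these off and using injectivity gives
`rank p ≤ rank φ(p)`, and the same count for `X ↦ φ X - φ 0` at `X = 1` gives `φ 0 = 0`.
For orthogonal idempotents `p, q`, the idempotents `φ p`, `φ q`, `φ(p + q) - φ p - φ q` and
`φ(1 - p - q)` are mutually orthogonal, and all but the third already have ranks adding up to at
least `n`, so the third vanishes. Finally `S = Σ λⱼ Pⱼ` satisfies `S ∘ Σ Pⱼ = S` and
`S ∘ Pⱼ = λⱼ Pⱼ`, whence `φ S = φ S ∘ Σ φ Pⱼ = Σ φ(λⱼ Pⱼ)`. -/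

instance Matrix.isAddTorsionFree {m n α : Type*} [AddMonoid α] [IsAddTorsionFree α] :
    IsAddTorsionFree (Matrix m n α) :=
  inferInstanceAs (IsAddTorsionFree (m → n → α))

theorem IsIdempotentElem.mul_eq_self_of_add_eq_two_nsmul {R : Type*} [Ring R]
    [IsAddTorsionFree R] {u y : R} (hu : IsIdempotentElem u) (h : u * y + y * u = 2 • y) :
    u * y = y ∧ y * u = y := by
  have hanti : (1 - u) * y + y * (1 - u) = 0 := by
    rw [sub_mul, mul_sub, one_mul, mul_one]
    calc y - u * y + (y - y * u) = 2 • y - (u * y + y * u) := by rw [two_nsmul]; abel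
      _ = 0 := by rw [h, sub_self]
  have hl : (1 - u) * y = 0 := hu.one_sub.mul_eq_zero_of_anticommute hanti
  have hr : y * (1 - u) = 0 := (hu.one_sub.commute_of_anticommute hanti).eq ▸ hl
  rw [sub_mul, one_mul, sub_eq_zero] at hl
  rw [mul_sub, mul_one, sub_eq_zero] at hr
  exact ⟨hl.symm, hr.symm⟩

theorem sub_mul_sub_eq_mul_sub {R : Type*} [NonUnitalRing R] {a b z : R} (haz : a * z = z)
    (hzb : z * b = z) (hz : z * z = z) : (a - z) * (b - z) = a * b - z := by
  rw [sub_mul, mul_sub, mul_sub, haz, hzb, hz, sub_self, sub_zero]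

theorem OrthogonalIdempotents.sum_smul_mul {K R ι : Type*} [CommSemiring K] [Semiring R]
    [Algebra K R] [Fintype ι] {e : ι → R} (he : OrthogonalIdempotents e) (c : ι → K) (j : ι) :
    (∑ i, c i • e i) * e j = c j • e j := by
  classical
  simp [Finset.sum_mul, he.mul_eq]

theorem OrthogonalIdempotents.mul_sum_smul {K R ι : Type*} [CommSemiring K] [Semiring R]
    [Algebra K R] [Fintype ι] {e : ι → R} (he : OrthogonalIdempotents e) (c : ι → K) (j : ι) :
    e j * (∑ i, c i • e i) = c j • e j := by
  classical
  simp [Finset.mul_sum, he.mul_eq]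

namespace Matrix

variable {l m K : Type*} [Fintype m] [DecidableEq m] [Field K]

theorem rank_eq_zero_iff {A : Matrix l m K} : A.rank = 0 ↔ A = 0 := by
  rw [rank, Submodule.finrank_eq_zero, LinearMap.range_eq_bot, ← toLin'_apply',
    LinearEquiv.map_eq_zero_iff]

theorem trace_eq_rank_of_isIdempotentElem {e : Matrix m m K} (he : IsIdempotentElem e) :
    e.trace = e.rank := by
  have h : IsIdempotentElem (toLin' e) := he.map toLinAlgEquiv'
  rw [← trace_toLin'_eq, ((LinearMap.isProj_range_iff_isIdempotentElem _).mpr h).trace, rank,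
    toLin'_apply']

variable [CharZero K] {e f : Matrix m m K}

theorem rank_add_of_mul_eq_zero (he : IsIdempotentElem e) (hf : IsIdempotentElem f)
    (hef : e * f = 0) (hfe : f * e = 0) : (e + f).rank = e.rank + f.rank := by
  have hsum : IsIdempotentElem (e + f) := he.add hf (by rw [hef, hfe, add_zero])
  exact_mod_cast calc
    ((e + f).rank : K) = (e + f).trace := (trace_eq_rank_of_isIdempotentElem hsum).symm
    _ = e.trace + f.trace := trace_add e f
    _ = e.rank + f.rank := by
      rw [trace_eq_rank_of_isIdempotentElem he, trace_eq_rank_of_isIdempotentElem hf]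

theorem rank_eq_rank_add_rank_sub (he : IsIdempotentElem e) (hf : IsIdempotentElem f)
    (hef : e * f = e) (hfe : f * e = e) : f.rank = e.rank + (f - e).rank := by
  have h := rank_add_of_mul_eq_zero he (he.sub hf hef hfe) (by rw [mul_sub, hef, he.eq, sub_self])
    (by rw [sub_mul, hfe, he.eq, sub_self])
  rwa [add_sub_cancel] at h

theorem exists_rank_eq_one_le {A : Subalgebra K (Matrix m m K)}
    (hdiag : ∀ i, single i i (1 : K) ∈ A) {p : Matrix m m K} (hp : p ∈ A)
    (hpi : IsIdempotentElem p) (hp0 : p ≠ 0) :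
    ∃ q ∈ A, IsIdempotentElem q ∧ q.rank = 1 ∧ q * p = q ∧ p * q = q := by
  obtain ⟨i, hi⟩ : ∃ i, p i i ≠ 0 := by
    by_contra! h
    apply hp0
    rw [← rank_eq_zero_iff, ← Nat.cast_eq_zero (R := K), ← trace_eq_rank_of_isIdempotentElem hpi]
    simp [trace, h]
  set E := single i i (1 : K)
  have hEpE : E * p * E = p i i • E := by simp [E, single_mul_mul_single, smul_single]
  set q := (p i i)⁻¹ • (p * E * p)
  have hqi : IsIdempotentElem q := by
    have hsq : (p * E * p) * (p * E * p) = p i i • (p * E * p) := by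
      rw [show (p * E * p) * (p * E * p) = p * (E * (p * p) * E) * p by noncomm_ring, hpi.eq,
        hEpE, mul_smul_comm, smul_mul_assoc]
    rw [IsIdempotentElem, smul_mul_smul_comm, hsq, smul_smul, mul_assoc, inv_mul_cancel₀ hi,
      mul_one]
  have hqtr : q.trace = 1 := by
    rw [trace_smul, trace_mul_comm, ← mul_assoc, hpi.eq, trace_mul_single]
    simp [hi]
  refine ⟨q, A.smul_mem (A.mul_mem (A.mul_mem hp (hdiag i)) hp) _, hqi, ?_, ?_, ?_⟩
  · exact_mod_cast (trace_eq_rank_of_isIdempotentElem hqi).symm.trans hqtr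
  · rw [smul_mul_assoc, mul_assoc, hpi.eq]
  · rw [mul_smul_comm, ← mul_assoc, ← mul_assoc, hpi.eq]

end Matrix

structure IsIdempotentEmbeddingOn {R : Type*} [Ring R] (ψ : R → R) (S : Set R) : Prop where
  isIdempotentElem : ∀ ⦃e⦄, e ∈ S → IsIdempotentElem e → IsIdempotentElem (ψ e)
  le : ∀ ⦃e f⦄, e ∈ S → f ∈ S → IsIdempotentElem e → IsIdempotentElem f → e * f = e →
    f * e = e → ψ e * ψ f = ψ e ∧ ψ f * ψ e = ψ e
  orthogonal : ∀ ⦃e f⦄, e ∈ S → f ∈ S → IsIdempotentElem e → IsIdempotentElem f → e * f = 0 →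
    f * e = 0 → ψ e * ψ f = 0
  ne_zero : ∀ ⦃e⦄, e ∈ S → IsIdempotentElem e → e ≠ 0 → ψ e ≠ 0

namespace IsIdempotentEmbeddingOn

open Matrix

variable {m K : Type*} [Fintype m] [DecidableEq m] [Field K] [CharZero K]
  {A : Subalgebra K (Matrix m m K)} {ψ : Matrix m m K → Matrix m m K}

theorem rank_le_rank (hψ : IsIdempotentEmbeddingOn ψ A) (hdiag : ∀ i, single i i (1 : K) ∈ A)
    {p : Matrix m m K} (hp : p ∈ A) (hpi : IsIdempotentElem p) : p.rank ≤ (ψ p).rank := by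
  obtain ⟨k, hk⟩ : ∃ k, p.rank = k := ⟨_, rfl⟩
  induction k generalizing p with
  | zero => exact hk ▸ Nat.zero_le _
  | succ k ih =>
    have hp0 : p ≠ 0 := by rintro rfl; simp at hk
    obtain ⟨q, hq, hqi, hq1, hqp, hpq⟩ := exists_rank_eq_one_le hdiag hp hpi hp0
    have hr : p - q ∈ A := A.sub_mem hp hq
    have hri : IsIdempotentElem (p - q) := hqi.sub hpi hqp hpq
    have hrp : (p - q) * p = p - q := by rw [sub_mul, hpi.eq, hqp]
    have hpr : p * (p - q) = p - q := by rw [mul_sub, hpi.eq, hpq]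
    have hrq : (p - q) * q = 0 := by rw [sub_mul, hpq, hqi.eq, sub_self]
    have hqr : q * (p - q) = 0 := by rw [mul_sub, hqp, hqi.eq, sub_self]
    have hrk : (p - q).rank = k := by
      have := rank_eq_rank_add_rank_sub hqi hpi hqp hpq
      omega
    have ha := hψ.isIdempotentElem hr hri
    have hb := hψ.isIdempotentElem hq hqi
    have hab := hψ.orthogonal hr hq hri hqi hrq hqr
    have hba := hψ.orthogonal hq hr hqi hri hqr hrq
    have hap := hψ.le hr hp hri hpi hrp hpr
    have hbp := hψ.le hq hp hqi hpi hqp hpq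
    have hb0 : ψ q ≠ 0 := hψ.ne_zero hq hqi (by rintro rfl; simp at hq1)
    have hsum := rank_eq_rank_add_rank_sub (ha.add hb (by rw [hab, hba, add_zero]))
      (hψ.isIdempotentElem hp hpi) (by rw [add_mul, hap.1, hbp.1])
      (by rw [mul_add, hap.2, hbp.2])
    rw [rank_add_of_mul_eq_zero ha hb hab hba] at hsum
    have := ih hr hri hrk
    have := Nat.pos_of_ne_zero (mt Matrix.rank_eq_zero_iff.mp hb0)
    omega

theorem map_add (hψ : IsIdempotentEmbeddingOn ψ A) (hdiag : ∀ i, single i i (1 : K) ∈ A)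
    {p q : Matrix m m K} (hp : p ∈ A) (hq : q ∈ A) (hpi : IsIdempotentElem p)
    (hqi : IsIdempotentElem q) (hpq : p * q = 0) (hqp : q * p = 0) : ψ (p + q) = ψ p + ψ q := by
  have hs : p + q ∈ A := A.add_mem hp hq
  have hsi : IsIdempotentElem (p + q) := hpi.add hqi (by rw [hpq, hqp, add_zero])
  have hc : 1 - (p + q) ∈ A := A.sub_mem A.one_mem hs
  have ha := hψ.isIdempotentElem hp hpi
  have hb := hψ.isIdempotentElem hq hqi
  have hab := hψ.orthogonal hp hq hpi hqi hpq hqp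
  have hba := hψ.orthogonal hq hp hqi hpi hqp hpq
  have has := hψ.le hp hs hpi hsi (by rw [mul_add, hpi.eq, hpq, add_zero])
    (by rw [add_mul, hpi.eq, hqp, add_zero])
  have hbs := hψ.le hq hs hqi hsi (by rw [mul_add, hqi.eq, hqp, zero_add])
    (by rw [add_mul, hqi.eq, hpq, zero_add])
  have hsc := hψ.orthogonal hs hc hsi hsi.one_sub hsi.mul_one_sub_self hsi.one_sub_mul_self
  have hcs := hψ.orthogonal hc hs hsi.one_sub hsi hsi.one_sub_mul_self hsi.mul_one_sub_self
  have hsplit := rank_eq_rank_add_rank_sub (ha.add hb (by rw [hab, hba, add_zero]))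
    (hψ.isIdempotentElem hs hsi) (by rw [add_mul, has.1, hbs.1]) (by rw [mul_add, has.2, hbs.2])
  rw [rank_add_of_mul_eq_zero ha hb hab hba] at hsplit
  have hdom := rank_add_of_mul_eq_zero (hψ.isIdempotentElem hs hsi)
    (hψ.isIdempotentElem hc hsi.one_sub) hsc hcs
  have hcod := rank_eq_rank_add_rank_sub hsi IsIdempotentElem.one (mul_one _) (one_mul _)
  rw [rank_add_of_mul_eq_zero hpi hqi hpq hqp, rank_one] at hcod
  have := rank_le_card_height (ψ (p + q) + ψ (1 - (p + q)))
  have := hψ.rank_le_rank hdiag hp hpi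
  have := hψ.rank_le_rank hdiag hq hqi
  have := hψ.rank_le_rank hdiag hc hsi.one_sub
  rw [← sub_eq_zero, ← Matrix.rank_eq_zero_iff]
  omega

theorem map_sum (hψ : IsIdempotentEmbeddingOn ψ A) (hdiag : ∀ i, single i i (1 : K) ∈ A)
    (hψ0 : ψ 0 = 0) {ι : Type*} {e : ι → Matrix m m K} (he : OrthogonalIdempotents e)
    (heA : ∀ i, e i ∈ A) (s : Finset ι) : ψ (∑ i ∈ s, e i) = ∑ i ∈ s, ψ (e i) := by
  classical
  induction s using Finset.induction_on with
  | empty => simpa using hψ0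
  | insert i s hi ih =>
    rw [Finset.sum_insert hi, Finset.sum_insert hi, ← ih]
    refine hψ.map_add hdiag (heA i) (A.sum_mem fun j _ => heA j) (he.idem i)
      he.isIdempotentElem_sum (he.mul_sum_of_notMem hi) ?_
    rw [Finset.sum_mul]
    exact Finset.sum_eq_zero fun j hj => he.ortho (by rintro rfl; exact hi hj)

end IsIdempotentEmbeddingOn

section Jordan

variable {n : ℕ}

theorem njord_self (X : Matrix (Fin n) (Fin n) ℂ) : njord X X = X * X := by
  rw [njord, ← two_smul ℂ (X * X), smul_smul]
  norm_num

theorem njord_eq_iff {X Y W : Matrix (Fin n) (Fin n) ℂ} :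
    njord X Y = W ↔ X * Y + Y * X = 2 • W := by
  rw [njord, two_nsmul]
  constructor
  · rintro rfl
    module
  · intro h
    rw [h]
    module

theorem njord_sum_right {ι : Type*} (s : Finset ι) (X : Matrix (Fin n) (Fin n) ℂ)
    (Y : ι → Matrix (Fin n) (Fin n) ℂ) : njord X (∑ i ∈ s, Y i) = ∑ i ∈ s, njord X (Y i) := by
  simp only [njord, Finset.mul_sum, Finset.sum_mul, ← Finset.sum_add_distrib, Finset.smul_sum]

def IsJordanMultiplicativeOn (φ : Matrix (Fin n) (Fin n) ℂ → Matrix (Fin n) (Fin n) ℂ)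
    (S : Set (Matrix (Fin n) (Fin n) ℂ)) : Prop :=
  ∀ X ∈ S, ∀ Y ∈ S, φ (njord X Y) = njord (φ X) (φ Y)

namespace IsJordanMultiplicativeOn

variable {φ : Matrix (Fin n) (Fin n) ℂ → Matrix (Fin n) (Fin n) ℂ}
  {S : Set (Matrix (Fin n) (Fin n) ℂ)} {X Y : Matrix (Fin n) (Fin n) ℂ}

theorem isIdempotentElem_map (hφ : IsJordanMultiplicativeOn φ S) (hX : X ∈ S)
    (hXi : IsIdempotentElem X) : IsIdempotentElem (φ X) := by
  have h := hφ X hX X hX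
  rwa [njord_self, hXi.eq, njord_self, eq_comm] at h

theorem map_anticomm (hφ : IsJordanMultiplicativeOn φ S) (hX : X ∈ S) (hY : Y ∈ S)
    {W : Matrix (Fin n) (Fin n) ℂ} (h : X * Y + Y * X = 2 • W) :
    φ X * φ Y + φ Y * φ X = 2 • φ W := by
  rw [← njord_eq_iff, ← hφ X hX Y hY, njord_eq_iff.mpr h]

theorem map_le (hφ : IsJordanMultiplicativeOn φ S) (hX : X ∈ S) (hY : Y ∈ S)
    (hYi : IsIdempotentElem Y) (hXY : X * Y = X) (hYX : Y * X = X) :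
    φ X * φ Y = φ X ∧ φ Y * φ X = φ X :=
  ((hφ.isIdempotentElem_map hY hYi).mul_eq_self_of_add_eq_two_nsmul
    (hφ.map_anticomm hY hX (by rw [hXY, hYX, two_nsmul]))).symm

variable {A : Subalgebra ℂ (Matrix (Fin n) (Fin n) ℂ)}

theorem isIdempotentEmbeddingOn_sub_map_zero (hφ : IsJordanMultiplicativeOn φ A)
    (hinj : Set.InjOn φ A) : IsIdempotentEmbeddingOn (fun X => φ X - φ 0) A := by
  have hz := hφ.isIdempotentElem_map A.zero_mem IsIdempotentElem.zero
  have hzle {X : Matrix (Fin n) (Fin n) ℂ} (hX : X ∈ A) (hXi : IsIdempotentElem X) :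
      φ 0 * φ X = φ 0 ∧ φ X * φ 0 = φ 0 :=
    hφ.map_le A.zero_mem hX hXi (zero_mul X) (mul_zero X)
  have hψi {X : Matrix (Fin n) (Fin n) ℂ} (hX : X ∈ A) (hXi : IsIdempotentElem X) :
      IsIdempotentElem (φ X - φ 0) :=
    hz.sub (hφ.isIdempotentElem_map hX hXi) (hzle hX hXi).1 (hzle hX hXi).2
  have hψmul {X Y : Matrix (Fin n) (Fin n) ℂ} (hX : X ∈ A) (hY : Y ∈ A)
      (hXi : IsIdempotentElem X) (hYi : IsIdempotentElem Y) :
      (φ X - φ 0) * (φ Y - φ 0) = φ X * φ Y - φ 0 :=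
    sub_mul_sub_eq_mul_sub (hzle hX hXi).2 (hzle hY hYi).1 hz.eq
  refine ⟨fun X hX hXi => hψi hX hXi, fun X Y hX hY hXi hYi hXY hYX => ?_,
    fun X Y hX hY hXi hYi hXY hYX => ?_,
    fun X hX _ hX0 h => hX0 (hinj hX A.zero_mem (sub_eq_zero.mp h))⟩
  · have h := hφ.map_le hX hY hYi hXY hYX
    rw [hψmul hX hY hXi hYi, hψmul hY hX hYi hXi, h.1, h.2]
    exact ⟨rfl, rfl⟩
  · refine (hψi hX hXi).mul_eq_zero_of_anticommute ?_
    have h := hφ.map_anticomm hX hY (W := 0) (by rw [hXY, hYX, add_zero, smul_zero])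
    rw [hψmul hX hY hXi hYi, hψmul hY hX hYi hXi, sub_add_sub_comm, h, two_nsmul, sub_self]

open Matrix in
theorem map_zero (hφ : IsJordanMultiplicativeOn φ A) (hinj : Set.InjOn φ A)
    (hdiag : ∀ i, single i i (1 : ℂ) ∈ A) : φ 0 = 0 := by
  have hz := hφ.isIdempotentElem_map A.zero_mem IsIdempotentElem.zero
  have hle := hφ.map_le A.zero_mem A.one_mem IsIdempotentElem.one (zero_mul 1) (mul_zero 1)
  have hfull := (hφ.isIdempotentEmbeddingOn_sub_map_zero hinj).rank_le_rank hdiag A.one_mem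
    IsIdempotentElem.one
  have hsplit := rank_eq_rank_add_rank_sub hz
    (hφ.isIdempotentElem_map A.one_mem IsIdempotentElem.one) hle.1 hle.2
  have := rank_le_height (φ 1)
  rw [rank_one, Fintype.card_fin] at hfull
  rw [← Matrix.rank_eq_zero_iff]
  omega

theorem isIdempotentEmbeddingOn (hφ : IsJordanMultiplicativeOn φ A) (hinj : Set.InjOn φ A)
    (hdiag : ∀ i, Matrix.single i i (1 : ℂ) ∈ A) : IsIdempotentEmbeddingOn φ A := by
  simpa [hφ.map_zero hinj hdiag] using hφ.isIdempotentEmbeddingOn_sub_map_zero hinj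

theorem map_sum_smul (hφ : IsJordanMultiplicativeOn φ A) (hinj : Set.InjOn φ A)
    (hdiag : ∀ i, Matrix.single i i (1 : ℂ) ∈ A) {ι : Type*} [Fintype ι]
    {e : ι → Matrix (Fin n) (Fin n) ℂ} (he : OrthogonalIdempotents e) (heA : ∀ i, e i ∈ A)
    (c : ι → ℂ) : φ (∑ i, c i • e i) = ∑ i, φ (c i • e i) := by
  set S := ∑ i, c i • e i
  have hS : S ∈ A := A.sum_mem fun i _ => A.smul_mem (heA i) (c i)
  have hSe (i : ι) : njord S (e i) = c i • e i :=
    njord_eq_iff.mpr (by rw [he.sum_smul_mul, he.mul_sum_smul, two_nsmul])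
  have hSE : njord S (∑ i, e i) = S := by
    rw [njord_sum_right]
    exact Finset.sum_congr rfl fun i _ => hSe i
  have hφE : φ (∑ i, e i) = ∑ i, φ (e i) :=
    (hφ.isIdempotentEmbeddingOn hinj hdiag).map_sum hdiag (hφ.map_zero hinj hdiag) he heA _
  calc φ S = njord (φ S) (∑ i, φ (e i)) := by
        rw [← hφE, ← hφ S hS _ (A.sum_mem fun i _ => heA i), hSE]
    _ = ∑ i, φ (c i • e i) := by
        rw [njord_sum_right]
        exact Finset.sum_congr rfl fun i _ => by rw [← hSe i, hφ S hS (e i) (heA i)]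

end IsJordanMultiplicativeOn

end Jordan

def structuralSubalgebra {n : ℕ} (ρ : Fin n → Fin n → Prop) (hrefl : ∀ i, ρ i i)
    (htrans : ∀ i j k, ρ i j → ρ j k → ρ i k) : Subalgebra ℂ (Matrix (Fin n) (Fin n) ℂ) where
  carrier := structuralMatrixAlgebra ρ
  mul_mem' {X Y} hX hY i j hij := by
    refine (Matrix.mul_apply (M := X) (N := Y)).trans (Finset.sum_eq_zero fun k _ => ?_)
    by_cases hik : ρ i k
    · rw [hY k j fun hkj => hij (htrans i k j hik hkj), mul_zero]
    · rw [hX i k hik, zero_mul]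
  add_mem' hX hY i j hij := by rw [Matrix.add_apply, hX i j hij, hY i j hij, add_zero]
  algebraMap_mem' _ i _ hij := Matrix.diagonal_apply_ne _ fun h => hij (h ▸ hrefl i)

theorem single_mem_structuralSubalgebra {n : ℕ} (ρ : Fin n → Fin n → Prop) (hrefl : ∀ i, ρ i i)
    (htrans : ∀ i j k, ρ i j → ρ j k → ρ i k) (i : Fin n) :
    Matrix.single i i (1 : ℂ) ∈ structuralSubalgebra ρ hrefl htrans := fun _ _ hab =>
  Matrix.single_apply_of_ne _ _ _ _ _ fun h => hab (h.1 ▸ h.2 ▸ hrefl i)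

/-- For an injective map on a structural matrix algebra preserving
the normalized Jordan product, and mutually orthogonal idempotents `P₁, …, P_r`
with scalars `λ₁, …, λ_r`, we have `φ(Σ λⱼ Pⱼ) = Σ φ(λⱼ Pⱼ)`. -/
theorem jordan_mult_map_additive_on_orth_combos {n : ℕ} (ρ : Fin n → Fin n → Prop)
    (hrefl : ∀ i, ρ i i) (htrans : ∀ i j k, ρ i j → ρ j k → ρ i k)
    (φ : Matrix (Fin n) (Fin n) ℂ → Matrix (Fin n) (Fin n) ℂ)
    (hinj : Set.InjOn φ (structuralMatrixAlgebra ρ))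
    (hjord : ∀ X ∈ structuralMatrixAlgebra ρ, ∀ Y ∈ structuralMatrixAlgebra ρ,
      φ (njord X Y) = njord (φ X) (φ Y))
    (r : ℕ) (P : Fin r → Matrix (Fin n) (Fin n) ℂ)
    (hPA : ∀ k, P k ∈ structuralMatrixAlgebra ρ)
    (hidem : ∀ k, P k * P k = P k)
    (horth : ∀ k l, k ≠ l → P k * P l = 0)
    (lam : Fin r → ℂ) :
    φ (∑ k, lam k • P k) = ∑ k, φ (lam k • P k) := by
  have hφ : IsJordanMultiplicativeOn φ (structuralSubalgebra ρ hrefl htrans) := hjord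
  exact hφ.map_sum_smul hinj (single_mem_structuralSubalgebra ρ hrefl htrans) ⟨hidem, horth⟩
    hPA lam
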